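/- arXiv:1005.0140 — 6 statements merged into one kernel-verified Lean document; each statement's English description precedes it below -/
import Mathlib

section
/- Let (g, [·,·], α) be a multiplicative hom-Lie algebra and u ∈ g with α(u) = u. Then for any nonnegative integer k, the linear map D_k(u): g → g defined by D_k(u)(v) = [α^k(v), u] is an α^{k+1}-derivation of g, i.e., D_k(u) ∘ α = α ∘ D_k(u) and D_k(u)([v,w]) = [D_k(u)(v), α^{k+1}(w)] + [α^{k+1}(v), D_k(u)(w)] for all v, w ∈ g. -/
/-- A hom-Lie algebra: a real vector space with a skew-symmetric bilinear bracket
and a linear map `α` satisfying the hom-Jacobi identity. -/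
structure HomLieAlgebra (g : Type*) [AddCommGroup g] [Module ℝ g] where
  bracket : g →ₗ[ℝ] g →ₗ[ℝ] g
  α : g →ₗ[ℝ] g
  skew : ∀ u v, bracket u v = - bracket v u
  jacobi : ∀ u v w,
    bracket (α u) (bracket v w) + bracket (α v) (bracket w u)
      + bracket (α w) (bracket u v) = 0

/-- In a multiplicative hom-Lie algebra, for `u` with `α(u) = u`, the map
`D_k(u)(v) = [α^k(v), u]` is an `α^{k+1}`-derivation. -/
theorem inner_derivation {g : Type*} [AddCommGroup g] [Module ℝ g]
    (L : HomLieAlgebra g)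
    (hmul : ∀ u v, L.α (L.bracket u v) = L.bracket (L.α u) (L.α v))
    (u : g) (hu : L.α u = u) (k : ℕ) :
    (∀ v : g, L.bracket ((L.α ^ k) (L.α v)) u = L.α (L.bracket ((L.α ^ k) v) u)) ∧
    (∀ v w : g,
      L.bracket ((L.α ^ k) (L.bracket v w)) u
        = L.bracket (L.bracket ((L.α ^ k) v) u) ((L.α ^ (k + 1)) w)
          + L.bracket ((L.α ^ (k + 1)) v) (L.bracket ((L.α ^ k) w) u)) := by

  have hpowmul : ∀ (v w : g), (L.α ^ k) (L.bracket v w)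
      = L.bracket ((L.α ^ k) v) ((L.α ^ k) w) := by
    induction k with
    | zero => intro v w; simp
    | succ n ih =>
      intro v w
      simp only [pow_succ', Module.End.mul_apply, ih, hmul]
  constructor
  · intro v
    have hcomm : (L.α ^ k) (L.α v) = L.α ((L.α ^ k) v) := by
      calc (L.α ^ k) (L.α v) = (L.α ^ (k + 1)) v := by
            rw [pow_succ, Module.End.mul_apply]
        _ = L.α ((L.α ^ k) v) := by rw [pow_succ', Module.End.mul_apply]
    rw [hcomm, hmul, hu]
  · intro v w
    set a := (L.α ^ k) v
    set b := (L.α ^ k) w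
    have hav : (L.α ^ (k + 1)) v = L.α a := by rw [pow_succ']; rfl
    have haw : (L.α ^ (k + 1)) w = L.α b := by rw [pow_succ']; rfl
    rw [hpowmul, hav, haw]
    have hj := L.jacobi a b u
    rw [hu] at hj
    have h1 : L.bracket u (L.bracket a b)
        = - L.bracket (L.α a) (L.bracket b u) - L.bracket (L.α b) (L.bracket u a) := by
      have h := eq_neg_of_add_eq_zero_right hj
      rw [h]; abel
    calc L.bracket (L.bracket a b) u = - L.bracket u (L.bracket a b) := L.skew _ _
      _ = L.bracket (L.α a) (L.bracket b u) + L.bracket (L.α b) (L.bracket u a) := by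
          rw [h1]; abel
      _ = L.bracket (L.bracket a u) (L.α b) + L.bracket (L.α a) (L.bracket b u) := by
          rw [L.skew (L.bracket a u) (L.α b), L.skew u a]
          simp [L.skew u a]
          abel
end

section
/- Let (g, [·,·], α) be a multiplicative hom-Lie algebra. If D is an α^k-derivation and D′ is an α^s-derivation, then the commutator [D, D′] = D ∘ D′ − D′ ∘ D is an α^{k+s}-derivation. -/
/-- `D` is an `α^k`-derivation of a multiplicative hom-Lie algebra. -/
def IsAlphaDer {g : Type*} [AddCommGroup g] [Module ℝ g]
    (L : HomLieAlgebra g) (k : ℕ) (D : g →ₗ[ℝ] g) : Prop :=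
  (∀ u, D (L.α u) = L.α (D u)) ∧
  (∀ u v, D (L.bracket u v)
    = L.bracket (D u) ((L.α ^ k) v) + L.bracket ((L.α ^ k) u) (D v))

/-- The commutator of an `α^k`-derivation and an `α^s`-derivation is an
`α^{k+s}`-derivation. -/
theorem commutator_derivation {g : Type*} [AddCommGroup g] [Module ℝ g]
    (L : HomLieAlgebra g)
    (hmul : ∀ u v, L.α (L.bracket u v) = L.bracket (L.α u) (L.α v))
    (k s : ℕ) (D D' : g →ₗ[ℝ] g)
    (hD : IsAlphaDer L k D) (hD' : IsAlphaDer L s D') :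
    IsAlphaDer L (k + s) (D ∘ₗ D' - D' ∘ₗ D) := by

  obtain ⟨hDc, hDd⟩ := hD
  obtain ⟨hD'c, hD'd⟩ := hD'
  have hDn : ∀ n u, D ((L.α ^ n) u) = (L.α ^ n) (D u) := by
    intro n
    induction n with
    | zero => intro u; simp
    | succ n ih =>
      intro u
      simp [pow_succ, Module.End.mul_apply, hDc, ih]
  have hD'n : ∀ n u, D' ((L.α ^ n) u) = (L.α ^ n) (D' u) := by
    intro n
    induction n with
    | zero => intro u; simp
    | succ n ih =>
      intro u
      simp [pow_succ, Module.End.mul_apply, hD'c, ih]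
  have hks : ∀ w, (L.α ^ (k + s)) w = (L.α ^ k) ((L.α ^ s) w) := by
    intro w; rw [pow_add]; rfl
  have hsk : ∀ w, (L.α ^ s) ((L.α ^ k) w) = (L.α ^ k) ((L.α ^ s) w) := by
    intro w
    rw [← Module.End.mul_apply, ← Module.End.mul_apply, ← pow_add, ← pow_add, add_comm]
  constructor
  · intro u
    simp [LinearMap.sub_apply, LinearMap.comp_apply, hDc, hD'c]
  · intro u v
    simp only [LinearMap.sub_apply, LinearMap.comp_apply, hDd, hD'd, map_add,
      LinearMap.add_apply, hDn, hD'n, hks, hsk, map_sub, LinearMap.sub_apply]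
    abel
end

section
/- Let (g, [·,·]_g, α) be a multiplicative hom-Lie algebra and D: g → g a linear map. On g ⊕ ℝD define the skew-symmetric bracket [u,v]_D = [u,v]_g, [D,u]_D = D(u) for u, v ∈ g, and the linear map α_D(u, sD) = (α(u), sD). Then (g ⊕ ℝD, [·,·]_D, α_D) is a multiplicative hom-Lie algebra if and only if D is an α-derivation of (g, [·,·]_g, α), i.e., D∘α = α∘D and D[u,v] = [D(u), α(v)] + [α(u), D(v)]. -/
/-- The derivation extension `g ⊕ ℝD` (modeled as `g × ℝ`, the pair `(u, s)`
standing for `u + sD`, with bracket `[(u,s),(v,t)] = ([u,v] + sD(v) − tD(u), 0)`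
and structure map `α_D(u,s) = (α(u), s)`) is a multiplicative hom-Lie algebra
if and only if `D` is an `α`-derivation. -/
theorem derivation_extension {g : Type*} [AddCommGroup g] [Module ℝ g]
    (L : HomLieAlgebra g)
    (hmul : ∀ u v, L.α (L.bracket u v) = L.bracket (L.α u) (L.α v))
    (D : g →ₗ[ℝ] g) :
    -- the bracket on g ⊕ ℝD
    (∀ B : g × ℝ → g × ℝ → g × ℝ,
      (B = fun p q => (L.bracket p.1 q.1 + p.2 • D q.1 - q.2 • D p.1, (0 : ℝ))) →
      (((∀ p q : g × ℝ,
          ((L.α (B p q).1, (B p q).2) : g × ℝ) = B (L.α p.1, p.2) (L.α q.1, q.2)) ∧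
        (∀ p q r : g × ℝ,
          B (L.α p.1, p.2) (B q r) + B (L.α q.1, q.2) (B r p)
            + B (L.α r.1, r.2) (B p q) = 0))
        ↔
        ((∀ u, D (L.α u) = L.α (D u)) ∧
         (∀ u v, D (L.bracket u v)
            = L.bracket (D u) (L.α v) + L.bracket (L.α u) (D v))))) := by
  intro B hB
  subst hB
  constructor
  · rintro ⟨h1, h2⟩
    constructor
    · intro u
      have := congrArg Prod.fst (h1 (0, 1) (u, 0))
      simpa using this.symm
    · intro u v
      have := congrArg Prod.fst (h2 (0, 1) (u, 0) (v, 0))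
      simp at this
      linear_combination (norm := module) this - L.skew (L.α v) (D u)
  · rintro ⟨hc, hd⟩
    constructor
    · intro p q
      simp [Prod.ext_iff, hc, hmul]
    · intro p q r
      obtain ⟨u, s⟩ := p; obtain ⟨v, t⟩ := q; obtain ⟨w, r⟩ := r
      simp only [Prod.mk_add_mk, Prod.ext_iff, map_add, map_sub, map_smul, smul_sub, smul_add]
      refine ⟨?_, by norm_num⟩
      simp only [zero_smul, Prod.fst_zero]
      linear_combination (norm := module) L.jacobi u v w + s • hd v w + t • hd w u
        + r • hd u v + t • L.skew (L.α u) (D w) + r • L.skew (L.α v) (D u)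
        + s • L.skew (L.α w) (D v)
end

section
/- Let (g, [·,·]_g, α) be a multiplicative hom-Lie algebra and θ: Λ²g → ℝ a skew-symmetric bilinear form with θ(α(u),α(v)) = θ(u,v). On h = g ⊕ ℝ define [(u,s),(v,t)]_θ = ([u,v]_g, θ(u,v)) and α_h(u,s) = (α(u), s). Then (h, [·,·]_θ, α_h) is a multiplicative hom-Lie algebra if and only if θ is closed, i.e., θ(α(u),[v,w]_g) + θ(α(v),[w,u]_g) + θ(α(w),[u,v]_g) = 0 for all u, v, w ∈ g. -/
/-- Central extension: `h = g ⊕ ℝ` with bracket `[(u,s),(v,t)]_θ = ([u,v], θ(u,v))`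
and `α_h(u,s) = (α(u), s)` is a multiplicative hom-Lie algebra if and only if `θ`
satisfies the 2-cocycle condition. -/
theorem central_extension {g : Type*} [AddCommGroup g] [Module ℝ g]
    (L : HomLieAlgebra g)
    (hmul : ∀ u v, L.α (L.bracket u v) = L.bracket (L.α u) (L.α v))
    (θ : g →ₗ[ℝ] g →ₗ[ℝ] ℝ)
    (hskew : ∀ u v, θ u v = - θ v u)
    (hinv : ∀ u v, θ (L.α u) (L.α v) = θ u v) :
    ∀ B : g × ℝ → g × ℝ → g × ℝ,
      (B = fun p q => (L.bracket p.1 q.1, θ p.1 q.1)) →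
      (((∀ p q : g × ℝ,
          ((L.α (B p q).1, (B p q).2) : g × ℝ) = B (L.α p.1, p.2) (L.α q.1, q.2)) ∧
        (∀ p q r : g × ℝ,
          B (L.α p.1, p.2) (B q r) + B (L.α q.1, q.2) (B r p)
            + B (L.α r.1, r.2) (B p q) = 0))
        ↔
        (∀ u v w : g,
          θ (L.α u) (L.bracket v w) + θ (L.α v) (L.bracket w u)
            + θ (L.α w) (L.bracket u v) = 0)) := by
  intro B hB
  subst hB
  constructor
  · rintro ⟨-, hjac⟩ u v w
    have := hjac (u, 0) (v, 0) (w, 0)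
    have h2 := congrArg Prod.snd this
    simpa using h2
  · intro hc
    constructor
    · intro p q
      simp [hmul, hinv]
    · intro p q r
      apply Prod.ext
      · simpa using L.jacobi p.1 q.1 r.1
      · simpa using hc p.1 q.1 r.1
end

section
/- Let (g, [·,·], α) be a regular hom-Lie algebra (α an algebra automorphism) and s any integer. Then the map ad_s: g → gl(g) defined by ad_s(u)(v) = [α^s(u), v] is a representation of g on itself with respect to α, i.e., ad_s(α(u))∘α = α∘ad_s(u) and ad_s([u,v])∘α = ad_s(α(u))∘ad_s(v) − ad_s(α(v))∘ad_s(u) for all u, v ∈ g. -/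
/-- A regular hom-Lie algebra: a real vector space with a skew-symmetric bilinear
bracket and a linear automorphism `e` (the structure map `α`) satisfying the
hom-Jacobi identity, with `e` an algebra automorphism. -/
structure RegularHomLieAlgebra (g : Type*) [AddCommGroup g] [Module ℝ g] where
  bracket : g →ₗ[ℝ] g →ₗ[ℝ] g
  e : g ≃ₗ[ℝ] g
  skew : ∀ u v, bracket u v = - bracket v u
  jacobi : ∀ u v w,
    bracket (e u) (bracket v w) + bracket (e v) (bracket w u)
      + bracket (e w) (bracket u v) = 0
  mult : ∀ u v, e (bracket u v) = bracket (e u) (e v)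

/- Both identities reduce to the hom-Jacobi identity once `α^s` is moved past `α` and through the
bracket: the automorphisms of the bracket form a subgroup of `GL(g)` containing `α`, so they
contain every `α^s`, and `α^s` commutes with `α`. -/

def LinearMap.automorphisms {R M : Type*} [CommRing R] [AddCommGroup M] [Module R M]
    (B : M →ₗ[R] M →ₗ[R] M) : Subgroup (M ≃ₗ[R] M) where
  carrier := {f | ∀ u v, f (B u v) = B (f u) (f v)}
  one_mem' _ _ := rfl
  mul_mem' {f h} hf hh u v := by
    rw [LinearEquiv.mul_apply, hh u v, hf]
    rfl
  inv_mem' {f} hf u v := f.injective <| by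
    rw [hf, ← LinearEquiv.mul_apply, ← LinearEquiv.mul_apply, ← LinearEquiv.mul_apply,
      mul_inv_cancel]
    rfl

namespace RegularHomLieAlgebra

variable {g : Type*} [AddCommGroup g] [Module ℝ g] (L : RegularHomLieAlgebra g)

lemma zpow_map_bracket (s : ℤ) (u v : g) :
    (L.e ^ s) (L.bracket u v) = L.bracket ((L.e ^ s) u) ((L.e ^ s) v) :=
  (L.bracket.automorphisms.zpow_mem (x := L.e) L.mult s) u v

lemma zpow_apply_e (s : ℤ) (u : g) : (L.e ^ s) (L.e u) = L.e ((L.e ^ s) u) := by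
  rw [← LinearEquiv.mul_apply, (Commute.zpow_self L.e s).eq, LinearEquiv.mul_apply]

lemma bracket_bracket_e (a b w : g) :
    L.bracket (L.bracket a b) (L.e w)
      = L.bracket (L.e a) (L.bracket b w) - L.bracket (L.e b) (L.bracket a w) := by
  have hjacobi := L.jacobi a b w
  rw [L.skew w a, map_neg] at hjacobi
  rw [L.skew, eq_neg_of_add_eq_zero_right hjacobi]
  abel

end RegularHomLieAlgebra

/-- For any integer `s`, the map `ad_s(u)(v) = [α^s(u), v]` is a representation
of the regular hom-Lie algebra on itself with respect to `α`. -/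
theorem alpha_s_adjoint_representation {g : Type*} [AddCommGroup g] [Module ℝ g]
    (L : RegularHomLieAlgebra g) (s : ℤ) :
    (∀ u v : g,
      L.bracket ((L.e ^ s) (L.e u)) (L.e v) = L.e (L.bracket ((L.e ^ s) u) v)) ∧
    (∀ u v w : g,
      L.bracket ((L.e ^ s) (L.bracket u v)) (L.e w)
        = L.bracket ((L.e ^ s) (L.e u)) (L.bracket ((L.e ^ s) v) w)
          - L.bracket ((L.e ^ s) (L.e v)) (L.bracket ((L.e ^ s) u) w)) := by
  refine ⟨fun u v => ?_, fun u v w => ?_⟩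
  · rw [L.zpow_apply_e, L.mult]
  · rw [L.zpow_map_bracket, L.zpow_apply_e, L.zpow_apply_e]
    exact L.bracket_bracket_e _ _ _
end

section
/- Let (g, [·,·], α) be a regular hom-Lie algebra and ω: Λ²g → g a skew-symmetric bilinear map commuting with α (i.e., ω(α(u),α(v)) = α(ω(u,v))). Then the bracket [u,v]_t = [u,v] + tω(u,v) makes (g, [·,·]_t, α) a hom-Lie algebra for every t ∈ ℝ if and only if both: (1) ω(α(u),[v,w]) + [α(u), ω(v,w)] + cyclic permutations in (u,v,w) = 0, and (2) ω(α(u), ω(v,w)) + cyclic permutations in (u,v,w) = 0. -/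
/-- `ω` generates a deformation `[u,v]_t = [u,v] + tω(u,v)` (i.e. `(g, [·,·]_t, α)` is a
hom-Lie algebra for every `t`) iff `ω` is closed for `ad_{-1}` and `ω` itself satisfies
the hom-Jacobi identity. -/
theorem deformation_conditions {g : Type*} [AddCommGroup g] [Module ℝ g]
    (L : RegularHomLieAlgebra g) (ω : g →ₗ[ℝ] g →ₗ[ℝ] g)
    (hskew : ∀ u v, ω u v = - ω v u)
    (hcomm : ∀ u v, ω (L.e u) (L.e v) = L.e (ω u v)) :
    (∀ t : ℝ,
      (∀ u v : g,
        L.bracket u v + t • ω u v = -(L.bracket v u + t • ω v u)) ∧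
      (∀ u v w : g,
        (L.bracket (L.e u) (L.bracket v w + t • ω v w)
            + t • ω (L.e u) (L.bracket v w + t • ω v w))
        + (L.bracket (L.e v) (L.bracket w u + t • ω w u)
            + t • ω (L.e v) (L.bracket w u + t • ω w u))
        + (L.bracket (L.e w) (L.bracket u v + t • ω u v)
            + t • ω (L.e w) (L.bracket u v + t • ω u v)) = 0))
    ↔
    ((∀ u v w : g,
        (ω (L.e u) (L.bracket v w) + L.bracket (L.e u) (ω v w))
        + (ω (L.e v) (L.bracket w u) + L.bracket (L.e v) (ω w u))
        + (ω (L.e w) (L.bracket u v) + L.bracket (L.e w) (ω u v)) = 0) ∧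
     (∀ u v w : g,
        ω (L.e u) (ω v w) + ω (L.e v) (ω w u) + ω (L.e w) (ω u v) = 0)) := by

  have expand : ∀ (t : ℝ) (u v w : g),
      (L.bracket (L.e u) (L.bracket v w + t • ω v w)
          + t • ω (L.e u) (L.bracket v w + t • ω v w))
      + (L.bracket (L.e v) (L.bracket w u + t • ω w u)
          + t • ω (L.e v) (L.bracket w u + t • ω w u))
      + (L.bracket (L.e w) (L.bracket u v + t • ω u v)
          + t • ω (L.e w) (L.bracket u v + t • ω u v))
      = t • ((ω (L.e u) (L.bracket v w) + L.bracket (L.e u) (ω v w))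
          + (ω (L.e v) (L.bracket w u) + L.bracket (L.e v) (ω w u))
          + (ω (L.e w) (L.bracket u v) + L.bracket (L.e w) (ω u v)))
        + (t * t) • (ω (L.e u) (ω v w) + ω (L.e v) (ω w u) + ω (L.e w) (ω u v)) := by
    intro t u v w
    have hJ := L.jacobi u v w
    simp only [map_add, map_smul, smul_add, smul_smul]
    linear_combination (norm := module) hJ
  constructor
  · intro h
    have h1 := (h 1).2
    have h2 := (h (-1)).2
    constructor
    · intro u v w
      have e1 := h1 u v w
      have e2 := h2 u v w
      rw [expand] at e1 e2
      have hB : (2 : ℝ) • ((ω (L.e u) (L.bracket v w) + L.bracket (L.e u) (ω v w))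
          + (ω (L.e v) (L.bracket w u) + L.bracket (L.e v) (ω w u))
          + (ω (L.e w) (L.bracket u v) + L.bracket (L.e w) (ω u v))) = 0 := by
        linear_combination (norm := module) e1 - e2
      have := congrArg (fun x => (1/2 : ℝ) • x) hB
      simpa [smul_smul] using this
    · intro u v w
      have e1 := h1 u v w
      have e2 := h2 u v w
      rw [expand] at e1 e2
      have hC : (2 : ℝ) • (ω (L.e u) (ω v w) + ω (L.e v) (ω w u) + ω (L.e w) (ω u v)) = 0 := by
        linear_combination (norm := module) e1 + e2
      have := congrArg (fun x => (1/2 : ℝ) • x) hC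
      simpa [smul_smul] using this
  · rintro ⟨hB, hC⟩ t
    constructor
    · intro u v
      rw [L.skew u v, hskew u v]
      module
    · intro u v w
      rw [expand, hB, hC, smul_zero, smul_zero, add_zero]
end
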